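/- For β₁ᵍ > 0, as the threshold c tends to infinity, the attenuation function γ(β₁ᵍ, π, c, β₀ᵍ) tends to 1 − π, and hence the asymptotic relative bias b = 1 − γ tends to π. -/

import Mathlib

/-!
With `ζ = Φ(β₀ − c)` and `ω = Φ(β₀ + β₁ − c)`, dividing numerator and denominator of `γ` by `ω`
gives `γ = π(1 − r) / (r(1 − E))` with `r = E/ω = (1 − π)ζ/ω + π`. As `c → ∞` both `ζ, ω → 0`,
and the Gaussian tail of the shifted point is exponentially thinner:
`Φ(x) ≤ exp(a x + a²/2) Φ(x + a)` for `a ≥ 0`, because the density ratio `φ(t − a)/φ(t) = exp(a t − a²/2)`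
is increasing in `t`. Hence `ζ/ω → 0`, `r → π`, `E → 0`, and `γ → π(1 − π)/π = 1 − π`.
-/

open MeasureTheory ProbabilityTheory Filter

/-- Standard normal CDF. -/
noncomputable def Phi (x : ℝ) : ℝ := ((gaussianReal 0 1) (Set.Iic x)).toReal

/-- Attenuation function `γ(β₁ᵍ, π, c, β₀ᵍ) = π(ω − E)/(E(1 − E))` with
`E = ζ(1−π) + ωπ`, `ω = Φ(β₁ᵍ + β₀ᵍ − c)`, `ζ = Φ(β₀ᵍ − c)`. -/
noncomputable def gammaFn (b1 p c b0 : ℝ) : ℝ :=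
  p * (Phi (b1 + b0 - c) - (Phi (b0 - c) * (1 - p) + Phi (b1 + b0 - c) * p)) /
    ((Phi (b0 - c) * (1 - p) + Phi (b1 + b0 - c) * p) *
      (1 - (Phi (b0 - c) * (1 - p) + Phi (b1 + b0 - c) * p)))

open Real Set Topology

lemma Phi_eq_cdf : Phi = cdf (gaussianReal 0 1) :=
  funext fun x => (cdf_eq_real _ x).symm

lemma tendsto_Phi_atBot : Tendsto Phi atBot (𝓝 0) :=
  Phi_eq_cdf ▸ tendsto_cdf_atBot _

lemma Phi_pos (x : ℝ) : 0 < Phi x := by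
  refine ENNReal.toReal_pos ?_ (measure_ne_top _ _)
  exact fun h => by simpa using gaussianReal_absolutelyContinuous' 0 one_ne_zero h

lemma Phi_eq_integral_shift (x a : ℝ) :
    Phi x = ∫ t in Iic (x + a), gaussianPDFReal 0 1 (t - a) := by
  have hpre : (· + a) ⁻¹' Iic (x + a) = Iic x := by simp [preimage_add_const_Iic]
  rw [Phi, ← hpre, ← Measure.map_apply (measurable_add_const a) measurableSet_Iic,
    gaussianReal_map_add_const, gaussianReal_apply_eq_integral _ one_ne_zero,
    ENNReal.toReal_ofReal
      (setIntegral_nonneg measurableSet_Iic fun t _ => gaussianPDFReal_nonneg _ _ t)]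
  simp_rw [gaussianPDFReal_sub]

lemma gaussianPDFReal_sub_le {a x t : ℝ} (ha : 0 ≤ a) (ht : t ≤ x + a) :
    gaussianPDFReal 0 1 (t - a) ≤ exp (a * x + a ^ 2 / 2) * gaussianPDFReal 0 1 t := by
  have hexp : exp (-(t - a) ^ 2 / 2) ≤ exp (a * x + a ^ 2 / 2) * exp (-t ^ 2 / 2) := by
    rw [← exp_add, exp_le_exp]
    nlinarith
  simp only [gaussianPDFReal, sub_zero, NNReal.coe_one, mul_one]
  calc _ ≤ (√(2 * π))⁻¹ * (exp (a * x + a ^ 2 / 2) * exp (-t ^ 2 / 2)) := by gcongr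
    _ = _ := by ring

lemma Phi_le_exp_mul_Phi_add {a : ℝ} (ha : 0 ≤ a) (x : ℝ) :
    Phi x ≤ exp (a * x + a ^ 2 / 2) * Phi (x + a) := by
  have hPhi : Phi (x + a) = ∫ t in Iic (x + a), gaussianPDFReal 0 1 t := by
    simpa using Phi_eq_integral_shift (x + a) 0
  rw [Phi_eq_integral_shift x a, hPhi, ← integral_const_mul]
  refine setIntegral_mono_on ?_ ?_ measurableSet_Iic fun t ht => gaussianPDFReal_sub_le ha ht
  · exact ((integrable_gaussianPDFReal 0 1).comp_sub_right a).integrableOn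
  · exact ((integrable_gaussianPDFReal 0 1).const_mul _).integrableOn

lemma tendsto_Phi_div_Phi_add_atBot {a : ℝ} (ha : 0 < a) :
    Tendsto (fun x => Phi x / Phi (x + a)) atBot (𝓝 0) := by
  have hexp : Tendsto (fun x => exp (a * x + a ^ 2 / 2)) atBot (𝓝 0) :=
    tendsto_exp_atBot.comp <| tendsto_atBot_add_const_right _ _ <|
      tendsto_id.const_mul_atBot ha
  refine squeeze_zero (fun x => div_nonneg (Phi_pos x).le (Phi_pos _).le) (fun x => ?_) hexp
  exact div_le_of_le_mul₀ (Phi_pos _).le (exp_pos _).le (Phi_le_exp_mul_Phi_add ha.le x)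

lemma tendsto_attenuation {α : Type*} {l : Filter α} {z w : α → ℝ} {p : ℝ} (hp : p ≠ 0)
    (hw : Tendsto w l (𝓝 0)) (hw0 : ∀ᶠ c in l, w c ≠ 0)
    (hzw : Tendsto (fun c => z c / w c) l (𝓝 0)) :
    Tendsto (fun c => p * (w c - (z c * (1 - p) + w c * p)) /
      ((z c * (1 - p) + w c * p) * (1 - (z c * (1 - p) + w c * p)))) l (𝓝 (1 - p)) := by
  have hz : Tendsto z l (𝓝 0) := by
    refine (zero_mul (0 : ℝ) ▸ hzw.mul hw).congr' ?_
    filter_upwards [hw0] with c hc using div_mul_cancel₀ _ hc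
  have hE : Tendsto (fun c => z c * (1 - p) + w c * p) l (𝓝 0) := by
    simpa using (hz.mul_const (1 - p)).add (hw.mul_const p)
  have hlim : Tendsto (fun c => p * (1 - ((1 - p) * (z c / w c) + p)) /
      (((1 - p) * (z c / w c) + p) * (1 - (z c * (1 - p) + w c * p)))) l
      (𝓝 (p * (1 - ((1 - p) * 0 + p)) / (((1 - p) * 0 + p) * (1 - 0)))) :=
    (tendsto_const_nhds.mul (tendsto_const_nhds.sub ((hzw.const_mul _).add_const p))).div
      (((hzw.const_mul _).add_const p).mul (tendsto_const_nhds.sub hE)) (by simpa using hp)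
  rw [show p * (1 - ((1 - p) * 0 + p)) / (((1 - p) * 0 + p) * (1 - 0)) = 1 - p by
    rw [mul_zero, zero_add, sub_zero, mul_one, mul_div_cancel_left₀ _ hp]] at hlim
  refine hlim.congr' ?_
  filter_upwards [hw0] with c hc
  rw [← mul_div_mul_left _ _ hc]
  congr 1 <;> field_simp

/-- For β₁ᵍ > 0, as the threshold c → ∞ the attenuation function γ tends to 1 − π
and the asymptotic relative bias b = 1 − γ tends to π. -/
theorem stmt_4 (b1 b0 p : ℝ) (hp : p ∈ Set.Ioo (0:ℝ) 1) (hb1 : 0 < b1) :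
    Tendsto (fun c => gammaFn b1 p c b0) atTop (nhds (1 - p)) ∧
      Tendsto (fun c => 1 - gammaFn b1 p c b0) atTop (nhds p) := by
  have hshift (b : ℝ) : Tendsto (fun c : ℝ => b - c) atTop atBot := by
    simpa [sub_eq_add_neg] using tendsto_atBot_add_const_left _ b tendsto_neg_atTop_atBot
  have hratio : Tendsto (fun c => Phi (b0 - c) / Phi (b1 + b0 - c)) atTop (𝓝 0) := by
    refine ((tendsto_Phi_div_Phi_add_atBot hb1).comp (hshift b0)).congr fun c => ?_
    simp only [Function.comp_apply, show b0 - c + b1 = b1 + b0 - c by ring]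
  have hγ : Tendsto (fun c => gammaFn b1 p c b0) atTop (𝓝 (1 - p)) :=
    tendsto_attenuation hp.1.ne' (tendsto_Phi_atBot.comp (hshift (b1 + b0)))
      (Eventually.of_forall fun c => (Phi_pos _).ne') hratio
  exact ⟨hγ, by simpa using hγ.const_sub 1⟩
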